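/- Let μ, r ∈ ℂ with r ∉ ℤ and r − μ ∉ ℤ. Then the sl(2)-module U_{μ,r} is irreducible: the only subspaces of U_{μ,r} invariant under all three operators e, h, f are the zero subspace and U_{μ,r} itself. -/

import Mathlib

/-! The sl(2)-module `U_{μ,r}`: underlying space `ℤ →₀ ℂ` with basis `E i = single i 1`. -/

/-- `e·E_i = E_{i−1}`. -/
noncomputable def eU : Module.End ℂ (ℤ →₀ ℂ) :=
  Finsupp.lift (ℤ →₀ ℂ) ℂ ℤ fun i => Finsupp.single (i - 1) 1

/-- `h·E_i = −(2r+2i−μ)·E_i`. -/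
noncomputable def hU (μ r : ℂ) : Module.End ℂ (ℤ →₀ ℂ) :=
  Finsupp.lift (ℤ →₀ ℂ) ℂ ℤ fun i =>
    (-(2 * r + 2 * (i : ℂ) - μ)) • Finsupp.single i 1

/-- `f·E_i = −(r+i+1)(r+i−μ)·E_{i+1}`. -/
noncomputable def fU (μ r : ℂ) : Module.End ℂ (ℤ →₀ ℂ) :=
  Finsupp.lift (ℤ →₀ ℂ) ℂ ℤ fun i =>
    (-((r + (i : ℂ) + 1) * (r + (i : ℂ) - μ))) • Finsupp.single (i + 1) 1

/-
`h` is diagonal in the basis `E_i` with pairwise distinct eigenvalues, so a nonzero invariant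
subspace contains some `E_i` (a nonzero vector of minimal support is an eigenvector). Then `e`
sends `E_i` to `E_{i-1}`, and `f` sends it to a multiple of `E_{i+1}` that is nonzero because
`r ∉ ℤ` and `r - μ ∉ ℤ`; so the subspace contains every `E_i`.
-/

open Finsupp

namespace Finsupp

variable {ι K : Type*} [Field K] {T : Module.End K (ι →₀ K)} {d : ι → K}

lemma apply_eq_mul_of_apply_single (hT : ∀ i, T (single i 1) = d i • single i 1)
    (v : ι →₀ K) (j : ι) : T v j = d j * v j := by
  classical
  induction v using Finsupp.induction_linear with
  | zero => simp
  | add a b ha hb => simp [ha, hb, mul_add]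
  | single i c =>
    rw [← smul_single_one, map_smul, hT, smul_smul]
    by_cases h : i = j <;> simp [h, mul_comm]

lemma sub_smul_apply_of_apply_single (hT : ∀ i, T (single i 1) = d i • single i 1)
    (v : ι →₀ K) (j k : ι) : (T v - d j • v) k = (d k - d j) * v k := by
  simp [apply_eq_mul_of_apply_single hT, sub_mul]

lemma support_sub_smul_subset_erase [DecidableEq ι]
    (hT : ∀ i, T (single i 1) = d i • single i 1) (v : ι →₀ K) (j : ι) :
    (T v - d j • v).support ⊆ v.support.erase j := by
  intro k hk
  rw [mem_support_iff, sub_smul_apply_of_apply_single hT] at hk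
  exact Finset.mem_erase.2 ⟨fun h => hk (by simp [h]), mem_support_iff.2 (right_ne_zero_of_mul hk)⟩

lemma eq_single_of_apply_eq_smul (hd : Function.Injective d)
    (hT : ∀ i, T (single i 1) = d i • single i 1) {v : ι →₀ K} {j : ι} (hv : T v = d j • v) :
    v = single j (v j) := by
  classical
  ext k
  by_cases hk : k = j
  · simp [hk]
  · have := sub_smul_apply_of_apply_single hT v j k
    rw [hv, sub_self, zero_apply, eq_comm, mul_eq_zero, sub_eq_zero] at this
    simpa [single_apply, Ne.symm hk] using this.resolve_left (hd.ne hk)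

lemma exists_single_mem_of_invariant (hd : Function.Injective d)
    (hT : ∀ i, T (single i 1) = d i • single i 1) {p : Submodule K (ι →₀ K)}
    (hp : ∀ v ∈ p, T v ∈ p) (hne : p ≠ ⊥) : ∃ i, single i 1 ∈ p := by
  classical
  obtain ⟨v, hv, hv0⟩ := p.exists_mem_ne_zero_of_ne_bot hne
  induction hn : v.support.card using Nat.strong_induction_on generalizing v with
  | _ n ih =>
  obtain ⟨j, hj⟩ := support_nonempty_iff.2 hv0
  by_cases hw0 : T v - d j • v = 0
  · have hvj : v = v j • single j 1 := by
      rw [smul_single_one]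
      exact eq_single_of_apply_eq_smul hd hT (sub_eq_zero.1 hw0)
    exact ⟨j, (p.smul_mem_iff (mem_support_iff.1 hj)).1 (hvj ▸ hv)⟩
  · have hlt : (T v - d j • v).support.card < n :=
      hn ▸ Finset.card_lt_card
        ((support_sub_smul_subset_erase hT v j).trans_ssubset (Finset.erase_ssubset hj))
    exact ih _ hlt _ (p.sub_mem (hp v hv) (p.smul_mem _ hv)) hw0 rfl

lemma submodule_eq_top_of_forall_single_mem {R : Type*} [Semiring R]
    {p : Submodule R (ι →₀ R)} (h : ∀ i, single i 1 ∈ p) : p = ⊤ := by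
  rw [eq_top_iff, ← (Finsupp.basisSingleOne (R := R)).span_eq, Submodule.span_le,
    coe_basisSingleOne]
  rintro _ ⟨i, rfl⟩
  exact h i

end Finsupp

section U

variable (μ r : ℂ)

lemma eU_single_one (i : ℤ) : eU (single i 1) = single (i - 1) 1 := by
  simp [eU]

lemma hU_single_one (i : ℤ) :
    hU μ r (single i 1) = (-(2 * r + 2 * (i : ℂ) - μ)) • single i 1 := by
  simp [hU]

lemma fU_single_one (i : ℤ) :
    fU μ r (single i 1) = (-((r + (i : ℂ) + 1) * (r + (i : ℂ) - μ))) • single (i + 1) 1 := by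
  simp [fU]

lemma hU_eigenvalue_injective : Function.Injective fun i : ℤ => -(2 * r + 2 * (i : ℂ) - μ) := by
  intro i j h
  exact_mod_cast (by linear_combination -h / 2 : (i : ℂ) = j)

variable {μ r}

lemma fU_coeff_ne_zero (hr : ∀ n : ℤ, r ≠ (n : ℂ)) (hrμ : ∀ n : ℤ, r - μ ≠ (n : ℂ)) (i : ℤ) :
    -((r + (i : ℂ) + 1) * (r + (i : ℂ) - μ)) ≠ 0 := by
  refine neg_ne_zero.2 (mul_ne_zero (fun h => hr (-(i + 1)) ?_) (fun h => hrμ (-i) ?_))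
  · push_cast; linear_combination h
  · push_cast; linear_combination h

end U

/-- For `r ∉ ℤ` and `r − μ ∉ ℤ`, the sl(2)-module `U_{μ,r}` is irreducible: its only
subspaces invariant under all of `e, h, f` are `⊥` and `⊤`. -/
theorem U_irreducible (μ r : ℂ) (hr : ∀ n : ℤ, r ≠ (n : ℂ))
    (hrμ : ∀ n : ℤ, r - μ ≠ (n : ℂ)) :
    ∀ p : Submodule ℂ (ℤ →₀ ℂ),
      (∀ v ∈ p, eU v ∈ p) →
      (∀ v ∈ p, hU μ r v ∈ p) →
      (∀ v ∈ p, fU μ r v ∈ p) →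
      p = ⊥ ∨ p = ⊤ := by
  intro p hpe hph hpf
  refine or_iff_not_imp_left.2 fun hne => ?_
  obtain ⟨i₀, hi₀⟩ :=
    exists_single_mem_of_invariant (hU_eigenvalue_injective μ r) (hU_single_one μ r) hph hne
  have hdown (i : ℤ) (hi : single i 1 ∈ p) : single (i - 1) 1 ∈ p :=
    eU_single_one i ▸ hpe _ hi
  have hup (i : ℤ) (hi : single i 1 ∈ p) : single (i + 1) 1 ∈ p :=
    (p.smul_mem_iff (fU_coeff_ne_zero hr hrμ i)).1 (fU_single_one μ r i ▸ hpf _ hi)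
  exact submodule_eq_top_of_forall_single_mem fun i =>
    Int.inductionOn' i i₀ hi₀ (fun k _ => hup k) (fun k _ => hdown k)
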